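/- Let n ≥ 1, let 0 = a₀ < a₁ < ⋯ < a_n be real numbers, and let λ₀, λ₁, …, λ_n > 0. For z ∈ ℂ \ {0} define the vector Θ̂(z) ∈ ℝ^{n²+2n} whose components are: |z|^{2a_k} − λ₀/λ_k for k = 1, …, n, together with |z|^{a_k + a_l} cos((a_l − a_k)·arg z) and |z|^{a_k + a_l} sin((a_l − a_k)·arg z) for each pair 0 ≤ k < l ≤ n. Then there exist points p₁, …, p_{n²+2n} ∈ ℂ \ {0} such that the (n²+2n)×(n²+2n) real matrix with columns Θ̂(p₁), …, Θ̂(p_{n²+2n}) is invertible. -/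

import Mathlib

/-!
Along the curve `z = exp ((1 + i) τ)` one has `|z| = e^τ` and `arg z = τ`, so every component of
`Θ̂(z)` becomes a real combination of the exponentials `exp ((a_k + a_l + i (a_l - a_k)) τ)`,
`(k, l) ∈ {0, …, n}²`; the constants `λ₀ / λ_k` are the case `k = l = 0` because `a₀ = 0`.
These `(n + 1)²` exponents are distinct, so the exponentials are linearly independent near
`τ = 0` (apply `d/dτ - μ` and induct). Hence the `n² + 2n` components of `Θ̂` are linearly
independent functions on `ℂ \ {0}`, and for linearly independent functions `f₁, …, f_N` the
vectors `(f_i(z))_i` span `ℝ^N`, so some `N` of them form an invertible matrix.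
-/

/-- Index type with `n² + 2n` elements: `n` indices of the "diagonal" kind, and, for each
pair `0 ≤ k < l ≤ n`, two indices (a cosine one, `false`, and a sine one, `true`). -/
abbrev TodaIdx (n : ℕ) :=
  Fin n ⊕ ({q : Fin (n + 1) × Fin (n + 1) // q.1 < q.2} × Bool)

open Complex Filter Topology Function

theorem exists_det_ne_zero_of_linearIndependent {ι α K : Type*} [Fintype ι] [DecidableEq ι]
    [Field K] {f : ι → α → K} (hf : LinearIndependent K f) :
    ∃ p : ι → α, (Matrix.of fun i j => f i (p j)).det ≠ 0 := by
  set v : α → ι → K := fun z i => f i z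
  have hspan : Submodule.span K (Set.range v) = ⊤ := by
    rw [← Submodule.dualAnnihilator_eq_bot_iff, Submodule.eq_bot_iff]
    intro φ hφ
    have hcoeff : (fun i => φ fun j => if i = j then 1 else 0) = 0 := by
      refine Fintype.linearIndependent_iff.1 hf _ ?_ |> funext
      funext z
      have := (Submodule.mem_dualAnnihilator φ).1 hφ (v z) (Submodule.subset_span ⟨z, rfl⟩)
      rw [LinearMap.pi_apply_eq_sum_univ φ] at this
      simpa [v, mul_comm] using this
    refine LinearMap.ext fun u => ?_
    simp [LinearMap.pi_apply_eq_sum_univ φ u, congrFun hcoeff]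
  obtain ⟨κ, q, -, hqspan, hqind⟩ := exists_linearIndependent' K v
  rw [hspan] at hqspan
  let e : κ ≃ ι := (Module.Basis.mk hqind hqspan.ge).indexEquiv (Pi.basisFun K ι)
  refine ⟨q ∘ e.symm, ?_⟩
  rw [← isUnit_iff_ne_zero, ← Matrix.isUnit_iff_isUnit_det,
    ← Matrix.linearIndependent_cols_iff_isUnit]
  exact hqind.comp e.symm e.symm.injective

theorem hasDerivAt_cexp_mul_ofReal (μ : ℂ) (t : ℝ) :
    HasDerivAt (fun t : ℝ => cexp (μ * t)) (μ * cexp (μ * t)) t := by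
  simpa [mul_comm] using ((hasDerivAt_id (t : ℂ)).const_mul μ).cexp.comp_ofReal

theorem eq_zero_of_eventually_sum_mul_cexp_eq_zero {ι : Type*} {μ : ι → ℂ} (hμ : Injective μ)
    (s : Finset ι) {c : ι → ℂ}
    (h : ∀ᶠ t : ℝ in 𝓝 0, ∑ j ∈ s, c j * cexp (μ j * t) = 0) : ∀ j ∈ s, c j = 0 := by
  classical
  induction s using Finset.induction_on generalizing c with
  | empty => simp
  | insert j₀ s hj₀ ih =>
    set f := fun t : ℝ => ∑ j ∈ insert j₀ s, c j * cexp (μ j * t)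
    have hf (t : ℝ) : HasDerivAt f (∑ j ∈ insert j₀ s, c j * (μ j * cexp (μ j * t))) t :=
      HasDerivAt.fun_sum fun j _ => (hasDerivAt_cexp_mul_ofReal (μ j) t).const_mul (c j)
    -- `f' - μ j₀ • f` no longer involves `cexp (μ j₀ * t)`
    have hrest : ∀ᶠ t : ℝ in 𝓝 0, ∑ j ∈ s, (c j * (μ j - μ j₀)) * cexp (μ j * t) = 0 := by
      filter_upwards [h, h.eventually_nhds] with t ht ht'
      have hderiv : deriv f t = 0 := by
        simpa using EventuallyEq.deriv_eq (f := fun _ => (0 : ℂ)) ht'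
      rw [(hf t).deriv, Finset.sum_insert hj₀] at hderiv
      rw [Finset.sum_insert hj₀] at ht
      rw [show ∑ j ∈ s, (c j * (μ j - μ j₀)) * cexp (μ j * t) =
          ∑ j ∈ s, c j * (μ j * cexp (μ j * t)) - μ j₀ * ∑ j ∈ s, c j * cexp (μ j * t) by
        rw [Finset.mul_sum, ← Finset.sum_sub_distrib]
        exact Finset.sum_congr rfl fun j _ => by ring]
      linear_combination hderiv - μ j₀ * ht
    have hs : ∀ j ∈ s, c j = 0 := fun j hj =>
      (mul_eq_zero.1 (ih hrest j hj)).resolve_right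
        (sub_ne_zero.2 (hμ.ne fun h => hj₀ (h ▸ hj)))
    have hj₀ : c j₀ = 0 := by
      have h0 := h.self_of_nhds
      simp only [Finset.sum_insert hj₀, Complex.ofReal_zero, mul_zero, Complex.exp_zero,
        mul_one] at h0
      rwa [Finset.sum_eq_zero hs, add_zero] at h0
    simpa [hj₀] using hs

noncomputable def todaTheta (a lam : ℕ → ℝ) {n : ℕ} : TodaIdx n → ℂ → ℝ
  | Sum.inl k, z => ‖z‖ ^ (2 * a ((k : ℕ) + 1)) - lam 0 / lam ((k : ℕ) + 1)
  | Sum.inr (q, bb), z =>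
      if bb then
        ‖z‖ ^ (a (q.1.1 : ℕ) + a (q.1.2 : ℕ)) *
          Real.sin ((a (q.1.2 : ℕ) - a (q.1.1 : ℕ)) * Complex.arg z)
      else
        ‖z‖ ^ (a (q.1.1 : ℕ) + a (q.1.2 : ℕ)) *
          Real.cos ((a (q.1.2 : ℕ) - a (q.1.1 : ℕ)) * Complex.arg z)

theorem norm_cexp_one_add_I_mul (τ : ℝ) : ‖cexp ((1 + I) * τ)‖ = Real.exp τ := by
  simp [Complex.norm_exp]

theorem arg_cexp_one_add_I_mul {τ : ℝ} (hτ : τ ∈ Set.Ioc (-Real.pi) Real.pi) :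
    arg (cexp ((1 + I) * τ)) = τ := by
  rw [arg_exp, show ((1 + I) * τ).im = τ by simp, toIocMod_eq_self]
  simpa [two_mul, ← add_assoc] using hτ

theorem ofReal_exp_mul_cos_add_sin (u v α ω τ : ℝ) :
    ((u * (Real.exp (τ * α) * Real.cos (ω * τ)) + v * (Real.exp (τ * α) * Real.sin (ω * τ)) :
        ℝ) : ℂ) = (u - v * I) / 2 * cexp ((α + ω * I) * τ) + (u + v * I) / 2 * cexp ((α - ω * I) * τ) := by
  have hplus : cexp ((α + ω * I) * τ) = cexp (τ * α) * (cos (ω * τ) + sin (ω * τ) * I) := by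
    rw [← exp_mul_I, ← Complex.exp_add]; congr 1; ring
  have hminus : cexp ((α - ω * I) * τ) = cexp (τ * α) * (cos (ω * τ) - sin (ω * τ) * I) := by
    rw [show cos (ω * τ) - sin (ω * τ) * I = cexp (-(ω * τ) * I) by
      rw [exp_mul_I, cos_neg, sin_neg]; ring, ← Complex.exp_add]
    congr 1; ring
  push_cast
  rw [hplus, hminus]
  linear_combination ((v : ℂ) * cexp (τ * α) * sin (ω * τ)) * I_sq

def pairExponent {ι : Type*} (b : ι → ℝ) (kl : ι × ι) : ℂ :=
  b kl.1 + b kl.2 + (b kl.2 - b kl.1) * I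

theorem pairExponent_injective {ι : Type*} {b : ι → ℝ} (hb : Injective b) :
    Injective (pairExponent b) := by
  rintro ⟨k, l⟩ ⟨k', l'⟩ h
  have hre := congrArg re h
  have him := congrArg im h
  simp only [pairExponent, add_re, add_im, ofReal_re, ofReal_im, mul_re, mul_im, sub_re, sub_im,
    I_re, I_im] at hre him
  have hl : b l = b l' := by linarith
  have hk : b k = b k' := by linarith
  rw [hb hk, hb hl]

def todaIndexPair {n : ℕ} : Option (TodaIdx n) → Fin (n + 1) × Fin (n + 1)
  | none => (0, 0)
  | some (Sum.inl k) => (k.succ, k.succ)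
  | some (Sum.inr (q, false)) => q.1
  | some (Sum.inr (q, true)) => q.1.swap

theorem todaIndexPair_injective {n : ℕ} : Injective (todaIndexPair (n := n)) := by
  rintro (_ | k | ⟨⟨⟨k, l⟩, hkl⟩, _ | _⟩) (_ | k' | ⟨⟨⟨k', l'⟩, hkl'⟩, _ | _⟩) h <;>
    simp only [todaIndexPair, Prod.mk.injEq, Prod.swap_prod_mk, Fin.ext_iff, Fin.val_succ,
      Fin.val_zero] at h <;>
    grind [Fin.lt_def]

noncomputable def todaCoeff {n : ℕ} (lam : ℕ → ℝ) (x : TodaIdx n → ℝ) : Option (TodaIdx n) → ℂ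
  | none => -∑ k : Fin n, x (Sum.inl k) * (lam 0 / lam ((k : ℕ) + 1))
  | some (Sum.inl k) => x (Sum.inl k)
  | some (Sum.inr (q, false)) => (x (Sum.inr (q, false)) - x (Sum.inr (q, true)) * I) / 2
  | some (Sum.inr (q, true)) => (x (Sum.inr (q, false)) + x (Sum.inr (q, true)) * I) / 2

theorem sum_todaTheta_cexp {n : ℕ} {a : ℕ → ℝ} (lam : ℕ → ℝ) (ha0 : a 0 = 0)
    (x : TodaIdx n → ℝ) {τ : ℝ} (hτ : τ ∈ Set.Ioc (-Real.pi) Real.pi) :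
    ((∑ r, x r * todaTheta a lam r (cexp ((1 + I) * τ)) : ℝ) : ℂ) =
      ∑ j, todaCoeff lam x j *
        cexp (pairExponent (fun k : Fin (n + 1) => a k) (todaIndexPair j) * τ) := by
  rw [Fintype.sum_option, Fintype.sum_sum_type, Fintype.sum_sum_type, Fintype.sum_prod_type,
    Fintype.sum_prod_type]
  simp only [Fintype.sum_bool, todaTheta, if_true, Bool.false_eq_true, if_false,
    norm_cexp_one_add_I_mul, arg_cexp_one_add_I_mul hτ, ← Real.exp_mul]
  rw [ofReal_add, ofReal_sum, ofReal_sum, ← add_assoc]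
  congr 1
  · simp only [todaCoeff, todaIndexPair, pairExponent, Fin.val_zero, Fin.val_succ, ha0]
    push_cast
    simp only [mul_sub, Finset.sum_sub_distrib, add_zero, sub_self, zero_mul, Complex.exp_zero]
    rw [mul_one, neg_add_eq_sub]
    congr 1
    exact Finset.sum_congr rfl fun k _ => by ring_nf
  · refine Finset.sum_congr rfl fun q _ => ?_
    rw [add_comm, ofReal_exp_mul_cos_add_sin]
    simp only [todaCoeff, todaIndexPair, pairExponent, Prod.fst_swap, Prod.snd_swap]
    push_cast
    ring_nf

theorem linearIndependent_todaTheta {n : ℕ} {a : ℕ → ℝ} (lam : ℕ → ℝ) (ha0 : a 0 = 0)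
    (ha : ∀ i, i < n → a i < a (i + 1)) :
    LinearIndependent ℝ fun (r : TodaIdx n) (z : {z : ℂ // z ≠ 0}) => todaTheta a lam r z := by
  have ha_inj : Injective fun k : Fin (n + 1) => a k :=
    (Fin.strictMono_iff_lt_succ.2 fun i => ha i i.isLt).injective
  rw [Fintype.linearIndependent_iff]
  intro x hx
  have hcoeff : ∀ j, todaCoeff lam x j = 0 := by
    refine fun j => eq_zero_of_eventually_sum_mul_cexp_eq_zero
      ((pairExponent_injective ha_inj).comp todaIndexPair_injective) Finset.univ ?_ j
      (Finset.mem_univ j)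
    filter_upwards [Ioo_mem_nhds (neg_neg_of_pos Real.pi_pos) Real.pi_pos] with τ hτ
    have := congrFun hx ⟨_, Complex.exp_ne_zero ((1 + I) * τ)⟩
    simp only [Finset.sum_apply, Pi.smul_apply, smul_eq_mul, Pi.zero_apply] at this
    simp only [comp_apply]
    rw [← sum_todaTheta_cexp lam ha0 x (Set.Ioo_subset_Ioc_self hτ), this, ofReal_zero]
  rintro (k | ⟨q, b⟩)
  · simpa [todaCoeff] using hcoeff (some (Sum.inl k))
  · have h := hcoeff (some (Sum.inr (q, false)))
    simp only [todaCoeff, div_eq_zero_iff, two_ne_zero, or_false] at h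
    have hre := congrArg re h
    have him := congrArg im h
    simp only [sub_re, ofReal_re, mul_re, I_re, I_im, ofReal_im, sub_im, mul_im, zero_re, zero_im,
      mul_zero, mul_one, sub_self, sub_zero, add_zero, zero_sub, neg_eq_zero] at hre him
    cases b <;> assumption

theorem stmt12 (n : ℕ)
    (a : ℕ → ℝ) (ha0 : a 0 = 0) (ha : ∀ i, i < n → a i < a (i + 1))
    (lam : ℕ → ℝ) :
    ∃ p : TodaIdx n → ℂ,
      (∀ t, p t ≠ 0) ∧
      (Matrix.of (fun r t : TodaIdx n =>
        match r with
        | Sum.inl k =>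
            ‖p t‖ ^ (2 * a ((k : ℕ) + 1)) - lam 0 / lam ((k : ℕ) + 1)
        | Sum.inr (q, bb) =>
            if bb then
              ‖p t‖ ^ (a (q.1.1 : ℕ) + a (q.1.2 : ℕ)) *
                Real.sin ((a (q.1.2 : ℕ) - a (q.1.1 : ℕ)) * Complex.arg (p t))
            else
              ‖p t‖ ^ (a (q.1.1 : ℕ) + a (q.1.2 : ℕ)) *
                Real.cos ((a (q.1.2 : ℕ) - a (q.1.1 : ℕ)) * Complex.arg (p t)))).det ≠ 0 := by
  obtain ⟨p, hp⟩ := exists_det_ne_zero_of_linearIndependent (linearIndependent_todaTheta lam ha0 ha)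
  refine ⟨fun t => p t, fun t => (p t).2, ?_⟩
  convert hp using 3
  -- `hp` computes `det` with the ring structure of `Field ℝ`
  case e'_5 => rfl
  case e'_6 =>
    funext r t
    rcases r with _ | ⟨_, _⟩ <;> rfl
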